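/- arXiv:2511.06504 — 2 statements merged into one kernel-verified Lean document; each statement's English description precedes it below -/
import Mathlib

section
/- Backup rank bound: Suppose under permutation σ_{-u*} on V \ {u*}, Ranking matches u to v, and u has a backup b (i.e., removing v from the permutation leaves u matched to b under Ranking). Then σ_{-u*}(v) < σ_{-u*}(b). -/
open List

variable {V : Type*}

/-- Whether vertex `u` is an endpoint of some edge in the partial matching `M`. -/
def isMatchedL [DecidableEq V] (M : List (V × V)) (u : V) : Bool :=
  M.any (fun p => p.1 = u || p.2 = u)

/-- One step of the Ranking algorithm: process vertex `u`.  If `u` is not forbidden and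
not yet matched, it is matched to the first available neighbor in the order `order`. -/
def rankingStepF [DecidableEq V] (G : SimpleGraph V) [DecidableRel G.Adj]
    (forbidden : List V) (order : List V) (M : List (V × V)) (u : V) : List (V × V) :=
  if u ∈ forbidden ∨ isMatchedL M u = true then M
  else
    match order.find? (fun w =>
        decide (G.Adj u w) && !(decide (w ∈ forbidden)) && !isMatchedL M w) with
    | some w => (u, w) :: M
    | none => M

/-- Partial matching of Ranking after processing the first `t` vertices of `order`. -/
def rankingPartialF [DecidableEq V] (G : SimpleGraph V) [DecidableRel G.Adj]
    (forbidden order : List V) (t : ℕ) : List (V × V) :=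
  (order.take t).foldl (rankingStepF G forbidden order) []

/-- The matching output by Ranking on the permutation given by the list `order`. -/
def rankingList [DecidableEq V] (G : SimpleGraph V) [DecidableRel G.Adj]
    (order : List V) : List (V × V) :=
  order.foldl (rankingStepF G [] order) []

/-- `u` is matched to `v` in the output of Ranking on `order`. -/
def matchedTo [DecidableEq V] (G : SimpleGraph V) [DecidableRel G.Adj]
    (order : List V) (u v : V) : Prop :=
  (u, v) ∈ rankingList G order ∨ (v, u) ∈ rankingList G order

/-- `u` is matched in the output of Ranking on `order`. -/
def isMatchedInRanking [DecidableEq V] (G : SimpleGraph V) [DecidableRel G.Adj]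
    (order : List V) (u : V) : Prop :=
  ∃ v, matchedTo G order u v

/-- The set of (unordered) edges of a list of matched pairs. -/
def matchEdges (L : List (V × V)) : Set (Sym2 V) := {e | ∃ p ∈ L, e = s(p.1, p.2)}

/-!
Write `σ = l₁ ++ v :: l₂` and compare Ranking on `σ` with Ranking on `l₁ ++ l₂`. As long as `v` is
unmatched in the first run, the two runs coincide: a free vertex that nobody has chosen yet
influences no choice. Look at the step of the first run that matches `v`, by uniqueness of
partners to `u`. Either `v` is processed and picks `u`, after all of `l₁` has been processed, or
`u` is processed and picks `v` as its first free neighbour. In both cases, at that moment of the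
second run `u` is free while all its neighbours in `l₁` are matched, necessarily to vertices other
than `u`. Matchings only grow during Ranking, so the final partner `b` of `u` in the second run is
not in `l₁`, i.e. it comes after `v` in `σ`.
-/

theorem List.exists_foldl_first_step {α β : Type*} (f : β → α → β) (p : β → Prop) {b : β}
    {l : List α} (h₀ : ¬ p b) (h₁ : p (l.foldl f b)) :
    ∃ P x S, l = P ++ x :: S ∧ ¬ p (P.foldl f b) ∧ p (f (P.foldl f b) x) := by
  induction l generalizing b with
  | nil => exact absurd h₁ h₀
  | cons a l ih =>
    by_cases ha : p (f b a)
    · exact ⟨[], a, l, rfl, h₀, ha⟩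
    · obtain ⟨P, x, S, rfl, hP, hx⟩ := ih ha h₁
      exact ⟨a :: P, x, S, rfl, hP, hx⟩

theorem List.find?_append_cons_of_ne {α : Type*} {l₁ l₂ : List α} {a : α} {p : α → Bool}
    (h : (l₁ ++ a :: l₂).find? p ≠ some a) : (l₁ ++ l₂).find? p = (l₁ ++ a :: l₂).find? p := by
  simp only [find?_append, find?_cons] at h ⊢
  cases h₁ : l₁.find? p <;> cases hpa : p a <;> simp_all

theorem List.find?_append_cons_eq_some_self {α : Type*} {l₁ l₂ : List α} {a : α}
    {p : α → Bool} (h : (l₁ ++ a :: l₂).find? p = some a) (ha : a ∉ l₁) :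
    ∀ y ∈ l₁, p y = false := by
  rw [find?_append] at h
  rcases h₁ : l₁.find? p with _ | w
  · simpa using find?_eq_none.1 h₁
  · rw [h₁, Option.some_or, Option.some_inj] at h
    exact absurd (h ▸ mem_of_find?_eq_some h₁) ha

namespace Ranking

def Partnered (M : List (V × V)) (x y : V) : Prop := (x, y) ∈ M ∨ (y, x) ∈ M

def IsMatching (G : SimpleGraph V) (M : List (V × V)) : Prop :=
  (∀ x y, Partnered M x y → G.Adj x y) ∧ ∀ x y z, Partnered M x y → Partnered M x z → y = z

section Matching

variable {G : SimpleGraph V} {M M' : List (V × V)} {x y : V}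

theorem partnered_comm : Partnered M x y ↔ Partnered M y x := or_comm

theorem partnered_cons {a b : V} :
    Partnered ((a, b) :: M) x y ↔ (x = a ∧ y = b ∨ x = b ∧ y = a) ∨ Partnered M x y := by
  simp only [Partnered, mem_cons, Prod.mk.injEq]
  tauto

theorem Partnered.of_sublist (h : M <+ M') (hxy : Partnered M x y) : Partnered M' x y :=
  hxy.imp (fun hm => h.subset hm) (fun hm => h.subset hm)

theorem isMatching_nil : IsMatching G ([] : List (V × V)) := by
  simp [IsMatching, Partnered]

variable [DecidableEq V]

theorem isMatchedL_iff : isMatchedL M x = true ↔ ∃ y, Partnered M x y := by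
  simp only [isMatchedL, any_eq_true, Bool.or_eq_true, decide_eq_true_eq, Partnered]
  constructor
  · rintro ⟨⟨a, b⟩, hp, rfl | rfl⟩
    exacts [⟨b, .inl hp⟩, ⟨a, .inr hp⟩]
  · rintro ⟨y, hp | hp⟩
    exacts [⟨_, hp, .inl rfl⟩, ⟨_, hp, .inr rfl⟩]

theorem isMatchedL_eq_false_iff : isMatchedL M x = false ↔ ∀ y, ¬ Partnered M x y := by
  rw [← Bool.not_eq_true, isMatchedL_iff, not_exists]

theorem isMatchedL_cons_left (y : V) : isMatchedL ((x, y) :: M) x = true :=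
  isMatchedL_iff.2 ⟨y, partnered_cons.2 (.inl (.inl ⟨rfl, rfl⟩))⟩

theorem isMatchedL_cons_right (y : V) : isMatchedL ((y, x) :: M) x = true :=
  isMatchedL_iff.2 ⟨y, partnered_cons.2 (.inl (.inr ⟨rfl, rfl⟩))⟩

theorem isMatchedL_of_sublist (h : M <+ M') (hx : isMatchedL M x = true) :
    isMatchedL M' x = true :=
  have ⟨y, hxy⟩ := isMatchedL_iff.1 hx
  isMatchedL_iff.2 ⟨y, hxy.of_sublist h⟩

theorem IsMatching.cons {w : V} (hM : IsMatching G M) (hxw : G.Adj x w)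
    (hx : isMatchedL M x = false) (hw : isMatchedL M w = false) : IsMatching G ((x, w) :: M) := by
  rw [isMatchedL_eq_false_iff] at hx hw
  refine ⟨fun a b hab => ?_, fun a b c hab hac => ?_⟩
  · rcases partnered_cons.1 hab with (⟨rfl, rfl⟩ | ⟨rfl, rfl⟩) | hab
    exacts [hxw, hxw.symm, hM.1 a b hab]
  · have := G.ne_of_adj hxw
    rcases partnered_cons.1 hab with (⟨rfl, rfl⟩ | ⟨rfl, rfl⟩) | hab <;>
      rcases partnered_cons.1 hac with (⟨h, rfl⟩ | ⟨h, rfl⟩) | hac <;>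
      first | rfl | exact hM.2 a b c hab hac | grind

theorem IsMatching.isMatchedL_eq_false_of_partnered {u b : V} (hM' : IsMatching G M')
    (h : M <+ M') (hu : isMatchedL M u = false) (hub : Partnered M' u b) :
    isMatchedL M b = false := by
  rw [isMatchedL_eq_false_iff] at hu ⊢
  intro c hbc
  obtain rfl : c = u := hM'.2 b c u (hbc.of_sublist h) (partnered_comm.1 hub)
  exact hu b (partnered_comm.1 hbc)

end Matching

section Step

variable [DecidableEq V] (G : SimpleGraph V) [DecidableRel G.Adj]

def avail (M : List (V × V)) (x : V) : V → Bool :=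
  fun w => decide (G.Adj x w) && !isMatchedL M w

variable {G}

theorem avail_eq_true {M : List (V × V)} {x w : V} :
    avail G M x w = true ↔ G.Adj x w ∧ isMatchedL M w = false := by
  simp [avail]

variable (G)

theorem rankingStepF_nil (O : List V) (M : List (V × V)) (x : V) :
    rankingStepF G [] O M x =
      if isMatchedL M x = true then M
      else match O.find? (avail G M x) with
        | some w => (x, w) :: M
        | none => M := by
  simp only [rankingStepF, not_mem_nil, false_or, decide_false, Bool.not_false, Bool.and_true]
  rfl

theorem rankingStepF_nil_cases (O : List V) (M : List (V × V)) (x : V) :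
    (rankingStepF G [] O M x = M ∧ (isMatchedL M x = true ∨ O.find? (avail G M x) = none)) ∨
      ∃ w, isMatchedL M x = false ∧ O.find? (avail G M x) = some w ∧
        rankingStepF G [] O M x = (x, w) :: M := by
  rw [rankingStepF_nil]
  split_ifs with hx
  · exact .inl ⟨rfl, .inl hx⟩
  · rcases hf : O.find? (avail G M x) with _ | w
    · exact .inl ⟨rfl, .inr rfl⟩
    · exact .inr ⟨w, by simpa using hx, rfl, rfl⟩

end Step

section Run

variable [DecidableEq V] {G : SimpleGraph V} [DecidableRel G.Adj] {O : List V}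

theorem suffix_rankingStepF (M : List (V × V)) (x : V) : M <:+ rankingStepF G [] O M x := by
  rcases rankingStepF_nil_cases G O M x with ⟨h, -⟩ | ⟨w, -, -, h⟩ <;> rw [h]
  exact suffix_cons _ _

theorem suffix_foldl_rankingStepF (M : List (V × V)) (P : List V) :
    M <:+ P.foldl (rankingStepF G [] O) M := by
  induction P generalizing M with
  | nil => exact suffix_rfl
  | cons x P ih => exact (suffix_rankingStepF M x).trans (ih _)

theorem foldl_rankingStepF_suffix_of_prefix {P Q : List V} (h : P <+: Q) :
    P.foldl (rankingStepF G [] O) [] <:+ Q.foldl (rankingStepF G [] O) [] := by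
  obtain ⟨R, rfl⟩ := h
  rw [foldl_append]
  exact suffix_foldl_rankingStepF _ R

theorem IsMatching.rankingStepF {M : List (V × V)} (hM : IsMatching G M) (x : V) :
    IsMatching G (rankingStepF G [] O M x) := by
  rcases rankingStepF_nil_cases G O M x with ⟨h, -⟩ | ⟨w, hx, hf, h⟩ <;> rw [h]
  · exact hM
  · obtain ⟨hxw, hw⟩ := avail_eq_true.1 (find?_some hf)
    exact hM.cons hxw hx hw

theorem isMatching_rankingList (O : List V) : IsMatching G (rankingList G O) := by
  suffices ∀ (P : List V) M, IsMatching G M → IsMatching G (P.foldl (rankingStepF G [] O) M) from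
    this O [] isMatching_nil
  intro P
  induction P with
  | nil => exact fun _ hM => hM
  | cons x P ih => exact fun M hM => ih _ (hM.rankingStepF x)

theorem mem_of_mem_foldl_rankingStepF {M : List (V × V)} {P : List V} {p : V × V}
    (hp : p ∈ P.foldl (rankingStepF G [] O) M) : p ∈ M ∨ p.1 ∈ P ∧ p.2 ∈ O := by
  induction P generalizing M with
  | nil => exact .inl hp
  | cons x P ih =>
    rcases ih hp with hp | ⟨h₁, h₂⟩
    · rcases rankingStepF_nil_cases G O M x with ⟨h, -⟩ | ⟨w, -, hf, h⟩ <;> rw [h] at hp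
      · exact .inl hp
      · rcases mem_cons.1 hp with rfl | hp
        exacts [.inr ⟨mem_cons_self, mem_of_find?_eq_some hf⟩, .inl hp]
    · exact .inr ⟨mem_cons_of_mem x h₁, h₂⟩

theorem mem_of_partnered_rankingList {x y : V} (h : Partnered (rankingList G O) x y) : y ∈ O := by
  rcases h with h | h <;> rcases mem_of_mem_foldl_rankingStepF h with h | h
  exacts [absurd h not_mem_nil, h.2, absurd h not_mem_nil, h.1]

theorem isMatchedL_foldl_rankingStepF_of_adj {P : List V} {x y : V} (hx : x ∈ P) (hy : y ∈ O)
    (hxy : G.Adj x y) :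
    isMatchedL (P.foldl (rankingStepF G [] O) []) x = true ∨
      isMatchedL (P.foldl (rankingStepF G [] O) []) y = true := by
  obtain ⟨P₁, P₂, rfl⟩ := append_of_mem hx
  rw [foldl_append, foldl_cons]
  set M : List (V × V) := P₁.foldl (rankingStepF G [] O) []
  have hsub := (suffix_foldl_rankingStepF (G := G) (O := O) (rankingStepF G [] O M x) P₂).sublist
  refine Or.imp (isMatchedL_of_sublist hsub) (isMatchedL_of_sublist hsub) ?_
  rcases rankingStepF_nil_cases G O M x with ⟨h, hx | hf⟩ | ⟨w, -, -, h⟩ <;> rw [h]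
  · exact .inl hx
  · refine .inr (Bool.not_eq_false _ ▸ fun hy' => ?_)
    exact find?_eq_none.1 hf y hy (avail_eq_true.2 ⟨hxy, hy'⟩)
  · exact .inl (isMatchedL_cons_left w)

end Run

section Removal

variable [DecidableEq V] {G : SimpleGraph V} [DecidableRel G.Adj] {l₁ l₂ : List V} {v : V}

theorem rankingStepF_erase_eq_of_ne {M : List (V × V)} {x : V}
    (hv : isMatchedL (rankingStepF G [] (l₁ ++ v :: l₂) M x) v = false) :
    rankingStepF G [] (l₁ ++ l₂) M x = rankingStepF G [] (l₁ ++ v :: l₂) M x := by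
  simp only [rankingStepF_nil] at hv ⊢
  split_ifs at hv ⊢
  · rfl
  rw [find?_append_cons_of_ne]
  intro hf
  rw [hf, isMatchedL_cons_right] at hv
  cases hv

theorem rankingStepF_self_eq_of_isMatchedL_eq_false {O : List V} {M : List (V × V)}
    (hv : isMatchedL (rankingStepF G [] O M v) v = false) : rankingStepF G [] O M v = M := by
  rcases rankingStepF_nil_cases G O M v with ⟨h, -⟩ | ⟨w, -, -, h⟩
  · exact h
  · rw [h, isMatchedL_cons_left] at hv
    cases hv

theorem foldl_rankingStepF_filter_ne {P : List V} {M : List (V × V)}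
    (hv : isMatchedL (P.foldl (rankingStepF G [] (l₁ ++ v :: l₂)) M) v = false) :
    (P.filter (· != v)).foldl (rankingStepF G [] (l₁ ++ l₂)) M =
      P.foldl (rankingStepF G [] (l₁ ++ v :: l₂)) M := by
  induction P generalizing M with
  | nil => rfl
  | cons x P ih =>
    rw [foldl_cons] at hv ⊢
    have hx : isMatchedL (rankingStepF G [] (l₁ ++ v :: l₂) M x) v = false := by
      rw [← Bool.not_eq_true] at hv ⊢
      exact mt (isMatchedL_of_sublist (suffix_foldl_rankingStepF _ P).sublist) hv
    by_cases hxv : x = v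
    · subst hxv
      rw [rankingStepF_self_eq_of_isMatchedL_eq_false hx] at hv ⊢
      rw [filter_cons_of_neg (by simp)]
      exact ih hv
    · rw [filter_cons_of_pos (by simpa using hxv), foldl_cons, rankingStepF_erase_eq_of_ne hx]
      exact ih hv

/-- The state just before Ranking on `l₁ ++ v :: l₂` matches `v`. -/
theorem partner_free_at_matching_step (hvl₁ : v ∉ l₁) (hvl₂ : v ∉ l₂) {u x : V} {P S : List V}
    (huv : Partnered (rankingList G (l₁ ++ v :: l₂)) u v) (hO : l₁ ++ v :: l₂ = P ++ x :: S)
    (hvP : isMatchedL (P.foldl (rankingStepF G [] (l₁ ++ v :: l₂)) []) v = false)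
    (hvx : isMatchedL (rankingStepF G [] (l₁ ++ v :: l₂)
      (P.foldl (rankingStepF G [] (l₁ ++ v :: l₂)) []) x) v = true) :
    isMatchedL (P.foldl (rankingStepF G [] (l₁ ++ v :: l₂)) []) u = false ∧
      ∀ w ∈ l₁, G.Adj u w →
        isMatchedL (P.foldl (rankingStepF G [] (l₁ ++ v :: l₂)) []) w = true := by
  set O := l₁ ++ v :: l₂
  set M : List (V × V) := P.foldl (rankingStepF G [] O) []
  have hMf := isMatching_rankingList (G := G) O
  rcases rankingStepF_nil_cases G O M x with ⟨h, -⟩ | ⟨w, hx, hf, h⟩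
  · rw [h, hvP] at hvx
    cases hvx
  have hxw : Partnered (rankingList G O) x w := by
    have hsuf := suffix_foldl_rankingStepF (G := G) (O := O) (rankingStepF G [] O M x) S
    rw [← foldl_cons, ← foldl_append, ← hO, h] at hsuf
    exact .inl (hsuf.subset mem_cons_self)
  rw [h] at hvx
  obtain ⟨y, hy⟩ := isMatchedL_iff.1 hvx
  rcases partnered_cons.1 hy with (⟨rfl, -⟩ | ⟨rfl, -⟩) | hy
  · -- `v` itself is processed: it picks `u`, after all of `l₁` has been processed
    obtain rfl : w = u := hMf.2 _ _ _ hxw (partnered_comm.1 huv)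
    obtain rfl : P = l₁ := ((append_cons_inj_of_notMem hvl₁ hvl₂).1 hO).1.symm
    have hu := (avail_eq_true.1 (find?_some hf)).2
    refine ⟨hu, fun w hw hadj => ?_⟩
    refine (isMatchedL_foldl_rankingStepF_of_adj hw (mem_of_find?_eq_some hf)
      hadj.symm).resolve_right ?_
    rw [hu]
    exact Bool.false_ne_true
  · -- `u` is processed and picks `v`, so no neighbour of `u` in `l₁` is free
    obtain rfl : x = u := hMf.2 _ _ _ (partnered_comm.1 hxw) (partnered_comm.1 huv)
    refine ⟨hx, fun w hw hadj => ?_⟩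
    have := find?_append_cons_eq_some_self hf hvl₁ w hw
    rw [← Bool.not_eq_true, avail_eq_true] at this
    simpa [hadj] using this
  · rw [isMatchedL_eq_false_iff] at hvP
    exact absurd hy (hvP y)

theorem backup_notMem_prefix (hvl₁ : v ∉ l₁) (hvl₂ : v ∉ l₂) {u b : V}
    (huv : Partnered (rankingList G (l₁ ++ v :: l₂)) u v)
    (hub : Partnered (rankingList G (l₁ ++ l₂)) u b) : b ∉ l₁ := by
  obtain ⟨P, x, S, hO, hvP, hvx⟩ := exists_foldl_first_step
    (rankingStepF G [] (l₁ ++ v :: l₂)) (fun M => isMatchedL M v = true) (b := [])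
    (by simp [isMatchedL]) (isMatchedL_iff.2 ⟨u, partnered_comm.1 huv⟩)
  rw [Bool.not_eq_true] at hvP
  obtain ⟨hu, hN⟩ := partner_free_at_matching_step hvl₁ hvl₂ huv hO hvP hvx
  rw [← foldl_rankingStepF_filter_ne hvP] at hu hN
  have hfilter : (l₁ ++ v :: l₂).filter (· != v) = l₁ ++ l₂ := by
    rw [filter_append, filter_cons_of_neg (by simp),
      filter_eq_self.2 fun a ha => bne_iff_ne.2 (ne_of_mem_of_not_mem ha hvl₁),
      filter_eq_self.2 fun a ha => bne_iff_ne.2 (ne_of_mem_of_not_mem ha hvl₂)]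
  have hsub := foldl_rankingStepF_suffix_of_prefix (G := G) (O := l₁ ++ l₂)
    (hfilter ▸ (hO ▸ prefix_append P (x :: S)).filter (· != v))
  intro hb
  have hM := isMatching_rankingList (G := G) (l₁ ++ l₂)
  have := hM.isMatchedL_eq_false_of_partnered hsub.sublist hu hub
  rw [hN b hb (hM.1 _ _ hub)] at this
  cases this

end Removal

end Ranking

theorem stmt13_general {V : Type*} [DecidableEq V] (G : SimpleGraph V) [DecidableRel G.Adj]
    (order : List V) (hnd : order.Nodup)
    (u v b : V) (hmatch : matchedTo G order u v)
    (hbackup : matchedTo G (order.erase v) u b) :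
    order.idxOf v < order.idxOf b := by
  have hv : v ∈ order := Ranking.mem_of_partnered_rankingList (G := G) hmatch
  obtain ⟨l₁, l₂, hvl₁, rfl, herase⟩ := exists_erase_eq hv
  have hvl₂ : v ∉ l₂ := (nodup_cons.1 (nodup_append.1 hnd).2.1).1
  have hbv : b ≠ v := by
    rintro rfl
    exact hnd.not_mem_erase (Ranking.mem_of_partnered_rankingList (G := G) hbackup)
  rw [herase] at hbackup
  have hb : b ∉ l₁ := Ranking.backup_notMem_prefix hvl₁ hvl₂ hmatch hbackup
  rw [idxOf_append_of_notMem hvl₁, idxOf_append_of_notMem hb, idxOf_cons_self,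
    idxOf_cons_ne _ hbv.symm]
  omega

/-- Backup rank bound: if Ranking on `σ₋ᵤ*` matches `u` to `v` and, after additionally
removing `v`, Ranking matches `u` to its backup `b`, then `σ₋ᵤ*(v) < σ₋ᵤ*(b)`. -/
theorem stmt13 {V : Type*} [DecidableEq V] (G : SimpleGraph V) [DecidableRel G.Adj]
    (order : List V) (hnd : order.Nodup) (ustar : V) (hu : ustar ∉ order)
    (hall : ∀ x : V, x ≠ ustar → x ∈ order)
    (u v b : V) (hmatch : matchedTo G order u v)
    (hbackup : matchedTo G (order.erase v) u b) :
    order.idxOf v < order.idxOf b :=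
  stmt13_general G order hnd u v b hmatch hbackup
end

section
/- Monotonicity with backup: Let σ be a permutation on V \ {u*} under which Ranking matches u to v and u has backup b with σ(b) > σ(v) + 1. Then in σ⁺ = σ_v^{σ(v)+1} (v swapped with its successor), Ranking still matches u to v and u's backup is still b. Consequently, for every i with σ(v) ≤ i < σ(b), Ranking on σ_v^i matches u to v with backup b at the same rank σ(b). -/
open List

variable {V : Type*}

/-!
Write `σ = A ++ v :: w :: C`, `σ' = A ++ w :: v :: C` (`v` swapped with its successor) and
`L = A ++ w :: C` (`v` removed). While `v` is free, a `find?` over `σ` that does not return `v`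
returns the same vertex over `σ'` and over `L`, so up to the step at which `v` gets matched in `σ`
the three runs pass through the same partial matchings. If at that step some `u` picks `v`, then
in `σ'` it picks `v` as well unless it prefers `w`, but then it picks `w` in `L` too and `w` is
the backup of `u`. If instead `v` picks `u`, the intermediate step of `w` in `σ'` cannot take `v`,
which `v` skipped, nor `u`, which would again make `w` the backup. Hence, as long as `w ≠ b`,
the swap keeps `u` matched to `v`, and iterating it moves `v` to any rank below that of `b`.
Removing `v` undoes every such move, so the backup and the rank of `b` do not change.
-/

namespace List

variable {α : Type*} {p : α → Bool}

theorem find?_append_cons_of_ne_s18 {A B : List α} {v : α} (h : (A ++ v :: B).find? p ≠ some v) :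
    (A ++ B).find? p = (A ++ v :: B).find? p := by
  cases hA : A.find? p <;> cases hv : p v <;> simp_all [find?_append]

theorem find?_swap_of_ne {A C : List α} {v w : α} (h : (A ++ v :: w :: C).find? p ≠ some v) :
    (A ++ w :: v :: C).find? p = (A ++ v :: w :: C).find? p := by
  cases hA : A.find? p <;> cases hv : p v <;> cases hw : p w <;> simp_all [find?_append]

theorem find?_swap_eq_some_or {A C : List α} {v w : α} (h : (A ++ v :: w :: C).find? p = some v) :
    (A ++ w :: v :: C).find? p = some v ∨ (A ++ w :: C).find? p = some w := by
  simp only [find?_append] at h ⊢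
  cases hA : A.find? p
  · cases hv : p v <;> cases hw : p w <;> simp_all
  · simp_all

theorem find?_eq_some_of_imp {p' : α → Bool} {l : List α} {y : α} (h : l.find? p = some y)
    (hy : p' y) (himp : ∀ x, p' x → p x) : l.find? p' = some y := by
  induction l with
  | nil => simp at h
  | cons a l ih =>
    by_cases ha : p a <;> by_cases ha' : p' a <;> simp_all

theorem find?_eq_none_of_append_eq_some {l₁ l₂ : List α} {u : α}
    (h : (l₁ ++ l₂).find? p = some u) (hu : u ∉ l₁) : l₁.find? p = none := by
  rw [find?_append] at h
  cases h₁ : l₁.find? p with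
  | none => rfl
  | some a =>
    rw [h₁, Option.some_or, Option.some.injEq] at h
    exact absurd (h ▸ mem_of_find?_eq_some h₁) hu

def AgreeAwayFrom (v : α) (ord ord' : List α) : Prop :=
  ∀ p : α → Bool, ord.find? p ≠ some v → ord'.find? p = ord.find? p

theorem agreeAwayFrom_swap (A C : List α) (v w : α) :
    AgreeAwayFrom v (A ++ v :: w :: C) (A ++ w :: v :: C) :=
  fun _ => find?_swap_of_ne

theorem agreeAwayFrom_erase (A B : List α) (v : α) : AgreeAwayFrom v (A ++ v :: B) (A ++ B) :=
  fun _ => find?_append_cons_of_ne_s18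

theorem perm_append_swap (A C : List α) (v w : α) : (A ++ v :: w :: C).Perm (A ++ w :: v :: C) :=
  (Perm.swap w v C).append_left A

theorem insertIdx_length_append (l₁ l₂ : List α) (a : α) :
    (l₁ ++ l₂).insertIdx l₁.length a = l₁ ++ a :: l₂ := by
  induction l₁ with
  | nil => rfl
  | cons x l₁ ih => simp [ih]

theorem Nodup.notMem_of_append_cons {P Q : List α} {x : α} (h : (P ++ x :: Q).Nodup) :
    x ∉ P :=
  fun hx => (nodup_append.1 h).2.2 x hx x (mem_cons_self ..) rfl

theorem exists_insertIdx_eq_append [DecidableEq α] {l : List α} {v b : α} (hnd : l.Nodup)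
    (hv : v ∈ l) (hb : b ∈ l.erase v) {i : ℕ} (hvi : l.idxOf v ≤ i) (hib : i < l.idxOf b) :
    ∃ A W C, l = A ++ v :: (W ++ C) ∧ (l.erase v).insertIdx i v = A ++ W ++ v :: C ∧
      b ∉ A ++ W ∧ b ≠ v := by
  have hbv : b ≠ v := (hnd.mem_erase_iff.1 hb).1
  obtain ⟨A, Q, rfl⟩ := append_of_mem hv
  have hvA : v ∉ A := hnd.notMem_of_append_cons
  rw [erase_append_right _ hvA, erase_cons_head] at hb ⊢
  rw [idxOf_append_of_notMem hvA, idxOf_cons_self] at hvi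
  have hbA : b ∉ A := fun h => by
    have := idxOf_append_of_mem (l₂ := v :: Q) h
    have := idxOf_lt_length_of_mem h
    omega
  rw [idxOf_append_of_notMem hbA, idxOf_cons_ne _ hbv.symm] at hib
  have hbQ : b ∈ Q := (mem_append.1 hb).resolve_left hbA
  obtain ⟨W, C, rfl, hW⟩ : ∃ W C, Q = W ++ C ∧ W.length = i - A.length :=
    ⟨Q.take (i - A.length), Q.drop (i - A.length), (take_append_drop _ _).symm,
      length_take_of_le (by have := idxOf_lt_length_of_mem hbQ; omega)⟩
  refine ⟨A, W, C, rfl, ?_, fun h => ?_, hbv⟩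
  · rw [← append_assoc, show i = (A ++ W).length by simp; omega,
      insertIdx_length_append]
  · rcases mem_append.1 h with h | h
    · exact hbA h
    · have := idxOf_append_of_mem (l₂ := C) h
      have := idxOf_lt_length_of_mem h
      omega

end List

namespace Ranking

variable [DecidableEq V] (G : SimpleGraph V) [DecidableRel G.Adj]

def freeNbr (M : List (V × V)) (x y : V) : Bool := decide (G.Adj x y) && !isMatchedL M y

def run (ord l : List V) (M : List (V × V)) : List (V × V) :=
  l.foldl (rankingStepF G [] ord) M

def stateBefore (ord : List V) (x : V) : List (V × V) :=
  run G ord (ord.take (ord.idxOf x)) []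

variable {G}

theorem isMatchedL_eq_true_iff {M : List (V × V)} {z : V} :
    isMatchedL M z = true ↔ ∃ p ∈ M, p.1 = z ∨ p.2 = z := by
  simp [isMatchedL]

theorem isMatchedL_cons_eq_false_iff {M : List (V × V)} {a c z : V} :
    isMatchedL ((a, c) :: M) z = false ↔ a ≠ z ∧ c ≠ z ∧ isMatchedL M z = false := by
  simp [isMatchedL, and_assoc]

theorem isMatchedL_of_subset {M M' : List (V × V)} (h : M ⊆ M') {z : V}
    (hz : isMatchedL M z = true) : isMatchedL M' z = true := by
  obtain ⟨p, hp, hpz⟩ := isMatchedL_eq_true_iff.1 hz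
  exact isMatchedL_eq_true_iff.2 ⟨p, h hp, hpz⟩

theorem freeNbr_eq_true_iff {M : List (V × V)} {x y : V} :
    freeNbr G M x y = true ↔ G.Adj x y ∧ isMatchedL M y = false := by
  simp [freeNbr]

@[simp]
theorem freeNbr_self (M : List (V × V)) (x : V) : freeNbr G M x x = false := by
  simp [freeNbr]

theorem freeNbr_of_subset {M M' : List (V × V)} (h : M ⊆ M') {x y : V}
    (hy : freeNbr G M' x y = true) : freeNbr G M x y = true := by
  rw [freeNbr_eq_true_iff] at hy ⊢
  refine ⟨hy.1, ?_⟩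
  cases hM : isMatchedL M y
  · rfl
  · simpa [isMatchedL_of_subset h hM] using hy.2

theorem rankingStepF_eq (ord : List V) (M : List (V × V)) (x : V) :
    rankingStepF G [] ord M x =
      if isMatchedL M x = true then M
      else match ord.find? (freeNbr G M x) with
        | some c => (x, c) :: M
        | none => M := by
  simp only [rankingStepF, not_mem_nil, false_or, decide_false, Bool.not_false, Bool.and_true]
  rfl

theorem rankingStepF_of_isMatchedL {ord : List V} {M : List (V × V)} {x : V}
    (h : isMatchedL M x = true) : rankingStepF G [] ord M x = M := by
  simp [rankingStepF_eq, h]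

theorem rankingStepF_of_find?_eq_some {ord : List V} {M : List (V × V)} {x c : V}
    (h : isMatchedL M x = false) (hc : ord.find? (freeNbr G M x) = some c) :
    rankingStepF G [] ord M x = (x, c) :: M := by
  simp [rankingStepF_eq, h, hc]

theorem rankingStepF_of_find?_eq_none {ord : List V} {M : List (V × V)} {x : V}
    (h : isMatchedL M x = false) (hc : ord.find? (freeNbr G M x) = none) :
    rankingStepF G [] ord M x = M := by
  simp [rankingStepF_eq, h, hc]

theorem rankingStepF_eq_or (ord : List V) (M : List (V × V)) (x : V) :
    rankingStepF G [] ord M x = M ∨ ∃ c, isMatchedL M x = false ∧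
      ord.find? (freeNbr G M x) = some c ∧ rankingStepF G [] ord M x = (x, c) :: M := by
  cases hx : isMatchedL M x
  · cases hc : ord.find? (freeNbr G M x) with
    | none => exact Or.inl (rankingStepF_of_find?_eq_none hx hc)
    | some c => exact Or.inr ⟨c, rfl, rfl, rankingStepF_of_find?_eq_some hx hc⟩
  · exact Or.inl (rankingStepF_of_isMatchedL hx)

theorem subset_rankingStepF (ord : List V) (M : List (V × V)) (x : V) :
    M ⊆ rankingStepF G [] ord M x := by
  rcases rankingStepF_eq_or (G := G) ord M x with h | ⟨c, -, -, h⟩ <;> rw [h]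
  · exact List.Subset.refl M
  · exact List.subset_cons_self _ M

@[simp]
theorem run_nil (ord : List V) (M : List (V × V)) : run G ord [] M = M := rfl

@[simp]
theorem run_cons (ord : List V) (a : V) (l : List V) (M : List (V × V)) :
    run G ord (a :: l) M = run G ord l (rankingStepF G [] ord M a) := rfl

@[simp]
theorem run_append (ord l₁ l₂ : List V) (M : List (V × V)) :
    run G ord (l₁ ++ l₂) M = run G ord l₂ (run G ord l₁ M) :=
  List.foldl_append

theorem rankingList_eq_run (ord : List V) : rankingList G ord = run G ord ord [] := rfl

theorem subset_run (ord l : List V) (M : List (V × V)) : M ⊆ run G ord l M := by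
  induction l generalizing M with
  | nil => exact List.Subset.refl M
  | cons a l ih => exact List.Subset.trans (subset_rankingStepF ord M a) (ih _)

theorem isMatchedL_eq_false_of_run {ord l : List V} {M : List (V × V)} {z : V}
    (h : isMatchedL (run G ord l M) z = false) : isMatchedL M z = false := by
  cases hM : isMatchedL M z
  · rfl
  · simp [isMatchedL_of_subset (subset_run ord l M) hM] at h

theorem mem_run_cases {ord l : List V} {M : List (V × V)} {e : V × V}
    (h : e ∈ run G ord l M) :
    e ∈ M ∨ ∃ P Q, l = P ++ e.1 :: Q ∧ isMatchedL (run G ord P M) e.1 = false ∧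
      ord.find? (freeNbr G (run G ord P M) e.1) = some e.2 := by
  induction l generalizing M with
  | nil => exact Or.inl h
  | cons a l ih =>
    rcases ih h with h | ⟨P, Q, rfl, hfree, hfind⟩
    · rcases rankingStepF_eq_or (G := G) ord M a with hs | ⟨c, hfree, hfind, hs⟩
      · exact Or.inl (hs ▸ h)
      · rw [hs, List.mem_cons] at h
        rcases h with rfl | h
        · exact Or.inr ⟨[], l, rfl, hfree, hfind⟩
        · exact Or.inl h
    · exact Or.inr ⟨a :: P, Q, rfl, hfree, hfind⟩

theorem mem_of_mem_rankingList {ord : List V} {x c : V} (h : (x, c) ∈ rankingList G ord) :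
    x ∈ ord ∧ c ∈ ord := by
  rcases mem_run_cases h with h | ⟨P, Q, hord, -, hfind⟩
  · simp at h
  · exact ⟨hord ▸ by simp, List.mem_of_find?_eq_some hfind⟩

theorem mem_of_matchedTo {ord : List V} {x y : V} (h : matchedTo G ord x y) : y ∈ ord :=
  h.elim (fun h => (mem_of_mem_rankingList h).2) (fun h => (mem_of_mem_rankingList h).1)

theorem stateBefore_eq_run {ord P Q : List V} {x : V} (hord : ord = P ++ x :: Q) (hx : x ∉ P) :
    stateBefore G ord x = run G ord P [] := by
  rw [stateBefore]
  congr 1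
  rw [hord, List.idxOf_append_of_notMem hx, List.idxOf_cons_self, Nat.add_zero,
    List.take_left' rfl]

theorem find?_stateBefore_of_mem_rankingList {ord : List V} (hnd : ord.Nodup) {x c : V}
    (h : (x, c) ∈ rankingList G ord) :
    isMatchedL (stateBefore G ord x) x = false ∧
      ord.find? (freeNbr G (stateBefore G ord x) x) = some c := by
  rcases mem_run_cases h with h | ⟨P, Q, hord, hfree, hfind⟩
  · simp at h
  · rw [stateBefore_eq_run hord (hord ▸ hnd).notMem_of_append_cons]
    exact ⟨hfree, hfind⟩

theorem mem_rankingList_of_find? {ord : List V} (hnd : ord.Nodup) {x c : V} (hx : x ∈ ord)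
    (hfree : isMatchedL (stateBefore G ord x) x = false)
    (hfind : ord.find? (freeNbr G (stateBefore G ord x) x) = some c) :
    (x, c) ∈ rankingList G ord := by
  obtain ⟨P, Q, hord⟩ := List.append_of_mem hx
  rw [stateBefore_eq_run hord (hord ▸ hnd).notMem_of_append_cons] at hfree hfind
  rw [rankingList_eq_run]
  nth_rw 2 [hord]
  rw [run_append, run_cons, rankingStepF_of_find?_eq_some hfree hfind]
  exact subset_run _ _ _ (List.mem_cons_self ..)

def IsMatchingList (M : List (V × V)) : Prop :=
  ∀ p ∈ M, ∀ q ∈ M, ∀ z, (p.1 = z ∨ p.2 = z) → (q.1 = z ∨ q.2 = z) → p = q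

theorem IsMatchingList.cons {M : List (V × V)} (hM : IsMatchingList M) {x c : V}
    (hx : isMatchedL M x = false) (hc : isMatchedL M c = false) :
    IsMatchingList ((x, c) :: M) := by
  have fresh : ∀ q ∈ M, ∀ z, (x = z ∨ c = z) → ¬(q.1 = z ∨ q.2 = z) := by
    rintro q hq z (rfl | rfl) hqz
    · simp [isMatchedL_eq_true_iff.2 ⟨q, hq, hqz⟩] at hx
    · simp [isMatchedL_eq_true_iff.2 ⟨q, hq, hqz⟩] at hc
  intro p hp q hq z hpz hqz
  rcases List.mem_cons.1 hp with rfl | hp <;> rcases List.mem_cons.1 hq with rfl | hq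
  · rfl
  · exact absurd hqz (fresh q hq z hpz)
  · exact absurd hpz (fresh p hp z hqz)
  · exact hM p hp q hq z hpz hqz

theorem isMatchingList_run (ord l : List V) {M : List (V × V)} (hM : IsMatchingList M) :
    IsMatchingList (run G ord l M) := by
  induction l generalizing M with
  | nil => exact hM
  | cons a l ih =>
    refine ih ?_
    rcases rankingStepF_eq_or (G := G) ord M a with hs | ⟨c, ha, hc, hs⟩ <;> rw [hs]
    · exact hM
    · exact hM.cons ha (freeNbr_eq_true_iff.1 (List.find?_some hc)).2

theorem matchedTo_unique {ord : List V} {x c d : V} (hc : matchedTo G ord x c)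
    (hd : matchedTo G ord x d) : c = d := by
  have hM : IsMatchingList (rankingList G ord) :=
    isMatchingList_run ord ord (by simp [IsMatchingList])
  rcases hc with hc | hc <;> rcases hd with hd | hd <;>
    have := hM _ hc _ hd x (by simp) (by simp) <;> simp_all

theorem not_adj_of_run {ord l : List V} {M : List (V × V)} {x y : V} (hx : x ∈ l)
    (hy : y ∈ ord)
    (hxfree : isMatchedL (run G ord l M) x = false)
    (hyfree : isMatchedL (run G ord l M) y = false) : ¬G.Adj x y := by
  induction l generalizing M with
  | nil => simp at hx
  | cons a l ih =>
    rcases List.mem_cons.1 hx with rfl | hx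
    · intro hxy
      have hxM := isMatchedL_eq_false_of_run hxfree
      cases hfind : ord.find? (freeNbr G M x) with
      | none =>
        exact List.find?_eq_none.1 hfind y hy
          (freeNbr_eq_true_iff.2 ⟨hxy, isMatchedL_eq_false_of_run hyfree⟩)
      | some c =>
        rw [run_cons, rankingStepF_of_find?_eq_some hxM hfind] at hxfree
        exact (isMatchedL_cons_eq_false_iff.1 (isMatchedL_eq_false_of_run hxfree)).1 rfl
    · exact ih hx hxfree hyfree

theorem find?_eq_none_of_rankingStepF {ord : List V} {M : List (V × V)} {x : V}
    (h : isMatchedL (rankingStepF G [] ord M x) x = false) :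
    ord.find? (freeNbr G M x) = none := by
  cases hc : ord.find? (freeNbr G M x) with
  | none => rfl
  | some c =>
    rw [rankingStepF_of_find?_eq_some (isMatchedL_eq_false_of_run (l := [x]) h) hc] at h
    exact absurd rfl (isMatchedL_cons_eq_false_iff.1 h).1

theorem rankingStepF_eq_self {ord : List V} {M : List (V × V)} {x : V}
    (h : isMatchedL (rankingStepF G [] ord M x) x = false) : rankingStepF G [] ord M x = M :=
  rankingStepF_of_find?_eq_none (isMatchedL_eq_false_of_run (l := [x]) h)
    (find?_eq_none_of_rankingStepF h)

theorem rankingStepF_congr {v : V} {ord ord' : List V} (h : List.AgreeAwayFrom v ord ord')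
    {M : List (V × V)} {x : V} (hv : isMatchedL (rankingStepF G [] ord M x) v = false) :
    rankingStepF G [] ord' M x = rankingStepF G [] ord M x := by
  cases hx : isMatchedL M x
  · have hne : ord.find? (freeNbr G M x) ≠ some v := by
      intro hfind
      rw [rankingStepF_of_find?_eq_some hx hfind] at hv
      exact (isMatchedL_cons_eq_false_iff.1 hv).2.1 rfl
    simp only [rankingStepF_eq, hx, h _ hne]
  · rw [rankingStepF_of_isMatchedL hx, rankingStepF_of_isMatchedL hx]

theorem run_congr {v : V} {ord ord' : List V} (h : List.AgreeAwayFrom v ord ord') {l : List V}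
    {M : List (V × V)} (hv : isMatchedL (run G ord l M) v = false) :
    run G ord' l M = run G ord l M := by
  induction l generalizing M with
  | nil => rfl
  | cons a l ih =>
    have hstep := rankingStepF_congr h (isMatchedL_eq_false_of_run (l := l) hv)
    rw [run_cons, run_cons, hstep]
    exact ih hv

section Swap

variable {A C : List V} {v w : V}

theorem run_pair_swap {N : List (V × V)}
    (hv : isMatchedL (run G (A ++ v :: w :: C) [v, w] N) v = false) :
    run G (A ++ w :: v :: C) [w, v] N = run G (A ++ v :: w :: C) [v, w] N ∧
      run G (A ++ w :: C) [w] N = run G (A ++ v :: w :: C) [v, w] N := by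
  have hvv := isMatchedL_eq_false_of_run (l := [w]) hv
  have hnone := find?_eq_none_of_rankingStepF hvv
  simp only [run_cons, run_nil, rankingStepF_eq_self hvv] at hv ⊢
  refine ⟨?_, rankingStepF_congr (List.agreeAwayFrom_erase A (w :: C) v) hv⟩
  rw [rankingStepF_congr (List.agreeAwayFrom_swap A C v w) hv]
  refine rankingStepF_of_find?_eq_none hv (List.find?_eq_none.2 fun y hy hfy => ?_)
  have hyσ : y ∈ A ++ v :: w :: C := by
    simp only [List.mem_append, List.mem_cons] at hy ⊢
    tauto
  exact List.find?_eq_none.1 hnone y hyσ (freeNbr_of_subset (subset_rankingStepF _ _ _) hfy)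

theorem stateBefore_swap_of_mem_right (hnd : (A ++ v :: w :: C).Nodup) {u : V} (hu : u ∈ C)
    (hv : isMatchedL (stateBefore G (A ++ v :: w :: C) u) v = false) :
    stateBefore G (A ++ w :: v :: C) u = stateBefore G (A ++ v :: w :: C) u ∧
      stateBefore G (A ++ w :: C) u = stateBefore G (A ++ v :: w :: C) u := by
  obtain ⟨C₁, C₂, rfl⟩ := List.append_of_mem hu
  have huP : u ∉ A ++ v :: w :: C₁ :=
    List.Nodup.notMem_of_append_cons (Q := C₂) (by simpa using hnd)
  have hσ : stateBefore G (A ++ v :: w :: (C₁ ++ u :: C₂)) u =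
      run G (A ++ v :: w :: (C₁ ++ u :: C₂)) (A ++ [v, w] ++ C₁) [] :=
    stateBefore_eq_run (Q := C₂) (by simp) (by simpa using huP)
  have hσ' : stateBefore G (A ++ w :: v :: (C₁ ++ u :: C₂)) u =
      run G (A ++ w :: v :: (C₁ ++ u :: C₂)) (A ++ [w, v] ++ C₁) [] :=
    stateBefore_eq_run (Q := C₂) (by simp) (by simp at huP ⊢; tauto)
  have hL : stateBefore G (A ++ w :: (C₁ ++ u :: C₂)) u =
      run G (A ++ w :: (C₁ ++ u :: C₂)) (A ++ [w] ++ C₁) [] :=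
    stateBefore_eq_run (Q := C₂) (by simp) (by simp at huP ⊢; tauto)
  rw [hσ, hσ', hL]
  rw [hσ] at hv
  simp only [run_append] at hv ⊢
  have hv₂ := isMatchedL_eq_false_of_run hv
  have hv₁ := isMatchedL_eq_false_of_run hv₂
  obtain ⟨hpair, hpairL⟩ := run_pair_swap hv₂
  rw [run_congr (List.agreeAwayFrom_swap A _ v w) hv₁, hpair,
    run_congr (List.agreeAwayFrom_erase A (w :: _) v) hv₁, hpairL]
  exact ⟨run_congr (List.agreeAwayFrom_swap A _ v w) hv,
    run_congr (List.agreeAwayFrom_erase A (w :: _) v) hv⟩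

theorem stateBefore_swap (hnd : (A ++ v :: w :: C).Nodup) {u : V} (hu : u ∈ A ++ v :: w :: C)
    (huv : u ≠ v) (hv : isMatchedL (stateBefore G (A ++ v :: w :: C) u) v = false) :
    stateBefore G (A ++ w :: v :: C) u = stateBefore G (A ++ v :: w :: C) u ∧
      stateBefore G (A ++ w :: C) u = stateBefore G (A ++ v :: w :: C) u := by
  simp only [List.mem_append, List.mem_cons] at hu
  rcases hu with huA | rfl | rfl | huC
  · obtain ⟨A₁, A₂, rfl⟩ := List.append_of_mem huA
    have huA₁ : u ∉ A₁ :=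
      List.Nodup.notMem_of_append_cons (Q := A₂ ++ v :: w :: C) (by simpa using hnd)
    have hσ : stateBefore G (A₁ ++ u :: A₂ ++ v :: w :: C) u =
        run G (A₁ ++ u :: A₂ ++ v :: w :: C) A₁ [] :=
      stateBefore_eq_run (Q := A₂ ++ v :: w :: C) (by simp) huA₁
    have hσ' : stateBefore G (A₁ ++ u :: A₂ ++ w :: v :: C) u =
        run G (A₁ ++ u :: A₂ ++ w :: v :: C) A₁ [] :=
      stateBefore_eq_run (Q := A₂ ++ w :: v :: C) (by simp) huA₁
    have hL : stateBefore G (A₁ ++ u :: A₂ ++ w :: C) u =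
        run G (A₁ ++ u :: A₂ ++ w :: C) A₁ [] :=
      stateBefore_eq_run (Q := A₂ ++ w :: C) (by simp) huA₁
    rw [hσ] at hv ⊢
    rw [hσ', hL]
    exact ⟨run_congr (List.agreeAwayFrom_swap _ C v w) hv,
      run_congr (List.agreeAwayFrom_erase _ (w :: C) v) hv⟩
  · exact absurd rfl huv
  · have huAv : u ∉ A ++ [v] := List.Nodup.notMem_of_append_cons (Q := C) (by simpa using hnd)
    have huA : u ∉ A := fun h => huAv (List.mem_append_left _ h)
    have hσ : stateBefore G (A ++ v :: u :: C) u = run G (A ++ v :: u :: C) (A ++ [v]) [] :=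
      stateBefore_eq_run (Q := C) (by simp) huAv
    rw [hσ] at hv ⊢
    rw [stateBefore_eq_run rfl huA, stateBefore_eq_run rfl huA]
    simp only [run_append, run_cons, run_nil] at hv ⊢
    have hstep := rankingStepF_eq_self hv
    rw [hstep] at hv ⊢
    exact ⟨run_congr (List.agreeAwayFrom_swap A C v u) hv,
      run_congr (List.agreeAwayFrom_erase A (u :: C) v) hv⟩
  · exact stateBefore_swap_of_mem_right hnd huC hv

theorem mem_rankingList_swap_of_left (hnd : (A ++ v :: w :: C).Nodup) {u : V}
    (h : (u, v) ∈ rankingList G (A ++ v :: w :: C)) (hw : ¬matchedTo G (A ++ w :: C) u w) :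
    (u, v) ∈ rankingList G (A ++ w :: v :: C) := by
  have hndL : (A ++ w :: C).Nodup := hnd.sublist ((List.sublist_cons_self v _).append_left A)
  obtain ⟨hfree, hfind⟩ := find?_stateBefore_of_mem_rankingList hnd h
  obtain ⟨hadj, hvfree⟩ := freeNbr_eq_true_iff.1 (List.find?_some hfind)
  have hu := (mem_of_mem_rankingList h).1
  obtain ⟨hσ', hL⟩ := stateBefore_swap hnd hu hadj.ne hvfree
  rcases List.find?_swap_eq_some_or hfind with hfind' | hfindL
  · exact mem_rankingList_of_find? ((List.perm_append_swap A C v w).nodup_iff.1 hnd)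
      ((List.perm_append_swap A C v w).subset hu) (hσ' ▸ hfree) (hσ' ▸ hfind')
  · have huL : u ∈ A ++ w :: C := by
      simp only [List.mem_append, List.mem_cons] at hu ⊢
      have := hadj.ne
      tauto
    exact absurd (Or.inl (mem_rankingList_of_find? hndL huL (hL ▸ hfree) (hL ▸ hfindL))) hw

theorem mem_rankingList_swap_of_right_succ (hnd : (A ++ v :: w :: C).Nodup)
    (h : (v, w) ∈ rankingList G (A ++ v :: w :: C)) :
    (w, v) ∈ rankingList G (A ++ w :: v :: C) := by
  have hvA : v ∉ A := hnd.notMem_of_append_cons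
  have hwA : w ∉ A := fun hwA =>
    List.Nodup.notMem_of_append_cons (P := A ++ [v]) (Q := C) (by simpa using hnd) (by simp [hwA])
  obtain ⟨hvfree, hfind⟩ := find?_stateBefore_of_mem_rankingList hnd h
  rw [stateBefore_eq_run rfl hvA] at hvfree hfind
  obtain ⟨hadj, hwfree⟩ := freeNbr_eq_true_iff.1 (List.find?_some hfind)
  have hN := run_congr (List.agreeAwayFrom_swap A C v w) hvfree
  have hnone : A.find? (freeNbr G (run G (A ++ v :: w :: C) A []) w) = none :=
    List.find?_eq_none.2 fun y hy hfy => by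
      obtain ⟨hwy, hyfree⟩ := freeNbr_eq_true_iff.1 hfy
      exact not_adj_of_run hy (by simp) hyfree hwfree hwy.symm
  have hnd' := (List.perm_append_swap A C v w).nodup_iff.1 hnd
  refine mem_rankingList_of_find? hnd' (by simp) ?_ ?_ <;> rw [stateBefore_eq_run rfl hwA, hN]
  · exact hwfree
  · rw [List.find?_append, hnone]
    simp [freeNbr_eq_true_iff.2 ⟨hadj.symm, hvfree⟩]

/-- In `A ++ w :: v :: C`, the step of `w` can take neither `v`, which `v` skipped in favour of
`u`, nor `u`, since `w` would then be matched to `u` also without `v`. -/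
theorem isMatchedL_rankingStepF_swap (hnd : (A ++ v :: w :: C).Nodup) {u : V} (huw : u ≠ w)
    (hw : ¬matchedTo G (A ++ w :: C) u w) {N : List (V × V)} (hN : run G (A ++ w :: C) A [] = N)
    (hvfree : isMatchedL N v = false) (hufree : isMatchedL N u = false)
    (hvw : freeNbr G N v w = false) :
    isMatchedL (rankingStepF G [] (A ++ w :: v :: C) N w) v = false ∧
      isMatchedL (rankingStepF G [] (A ++ w :: v :: C) N w) u = false := by
  rcases rankingStepF_eq_or (G := G) (A ++ w :: v :: C) N w with hs | ⟨c, hwfree, hc, hs⟩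
  · rw [hs]
    exact ⟨hvfree, hufree⟩
  have hwA : w ∉ A := ((List.perm_append_swap A C v w).nodup_iff.1 hnd).notMem_of_append_cons
  obtain ⟨hwc, -⟩ := freeNbr_eq_true_iff.1 (List.find?_some hc)
  have hcv : c ≠ v := by
    rintro rfl
    simp [freeNbr_eq_true_iff.2 ⟨hwc.symm, hwfree⟩] at hvw
  have hcu : c ≠ u := by
    rintro rfl
    have hfindL : (A ++ w :: C).find? (freeNbr G N w) = some c := by
      simpa [hc] using List.find?_append_cons_of_ne_s18 (A := A ++ [w]) (B := C) (v := v)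
        (p := freeNbr G N w) (by simpa [hc] using hcv)
    have hndL : (A ++ w :: C).Nodup := hnd.sublist ((List.sublist_cons_self v _).append_left A)
    refine hw (Or.inr (mem_rankingList_of_find? hndL (by simp) ?_ ?_)) <;>
      rw [stateBefore_eq_run rfl hwA, hN]
    exacts [hwfree, hfindL]
  have hwv : w ≠ v := fun h => (List.nodup_cons.1 (List.nodup_append.1 hnd).2.1).1 (by simp [h])
  rw [hs]
  exact ⟨isMatchedL_cons_eq_false_iff.2 ⟨hwv, hcv, hvfree⟩,
    isMatchedL_cons_eq_false_iff.2 ⟨huw.symm, hcu, hufree⟩⟩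

theorem mem_rankingList_swap_of_right (hnd : (A ++ v :: w :: C).Nodup) {u : V} (huw : u ≠ w)
    (h : (v, u) ∈ rankingList G (A ++ v :: w :: C)) (hw : ¬matchedTo G (A ++ w :: C) u w) :
    (v, u) ∈ rankingList G (A ++ w :: v :: C) := by
  have hnd' := (List.perm_append_swap A C v w).nodup_iff.1 hnd
  have hvA : v ∉ A := hnd.notMem_of_append_cons
  have hvAw : v ∉ A ++ [w] := List.Nodup.notMem_of_append_cons (Q := C) (by simpa using hnd')
  obtain ⟨hvfree, hfind⟩ := find?_stateBefore_of_mem_rankingList hnd h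
  rw [stateBefore_eq_run rfl hvA] at hvfree hfind
  set N := run G (A ++ v :: w :: C) A []
  obtain ⟨hadj, hufree⟩ := freeNbr_eq_true_iff.1 (List.find?_some hfind)
  have huA : u ∉ A := fun huA => not_adj_of_run huA (by simp) hufree hvfree hadj.symm
  have hfind' : (A ++ w :: v :: C).find? (freeNbr G N v) = some u :=
    (List.find?_swap_of_ne (by simpa [hfind] using hadj.ne')).trans hfind
  have hvw : freeNbr G N v w = false := by
    have hnone : (A ++ [v, w]).find? (freeNbr G N v) = none :=
      List.find?_eq_none_of_append_eq_some (l₂ := C) (u := u) (by simpa using hfind)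
        (by simp [huA, hadj.ne', huw])
    simpa using List.find?_eq_none.1 hnone w (by simp)
  have hsb : stateBefore G (A ++ w :: v :: C) v = rankingStepF G [] (A ++ w :: v :: C) N w := by
    rw [stateBefore_eq_run (Q := C) (by simp) hvAw, run_append,
      run_congr (List.agreeAwayFrom_swap A C v w) hvfree]
    rfl
  obtain ⟨hvfree₂, hufree₂⟩ := isMatchedL_rankingStepF_swap hnd huw hw
    (run_congr (List.agreeAwayFrom_erase A (w :: C) v) hvfree) hvfree hufree hvw
  refine mem_rankingList_of_find? hnd' (by simp) (hsb ▸ hvfree₂) ?_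
  rw [hsb]
  exact List.find?_eq_some_of_imp hfind' (freeNbr_eq_true_iff.2 ⟨hadj, hufree₂⟩)
    fun y => freeNbr_of_subset (subset_rankingStepF _ _ _)

theorem matchedTo_swap (hnd : (A ++ v :: w :: C).Nodup) {u : V}
    (hmatch : matchedTo G (A ++ v :: w :: C) u v) (hw : ¬matchedTo G (A ++ w :: C) u w) :
    matchedTo G (A ++ w :: v :: C) u v := by
  rcases hmatch with h | h
  · exact Or.inl (mem_rankingList_swap_of_left hnd h hw)
  · by_cases huw : u = w
    · subst huw
      exact Or.inl (mem_rankingList_swap_of_right_succ hnd h)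
    · exact Or.inr (mem_rankingList_swap_of_right hnd huw h hw)

end Swap

theorem matchedTo_move_right {A W C : List V} {u v b : V} (hnd : (A ++ v :: (W ++ C)).Nodup)
    (hmatch : matchedTo G (A ++ v :: (W ++ C)) u v) (hbackup : matchedTo G (A ++ (W ++ C)) u b)
    (hbW : b ∉ W) : matchedTo G (A ++ W ++ v :: C) u v := by
  induction W generalizing A with
  | nil => simpa using hmatch
  | cons w W ih =>
    have hw : ¬matchedTo G (A ++ w :: (W ++ C)) u w := fun hw =>
      hbW (matchedTo_unique (by simpa using hbackup) hw ▸ List.mem_cons_self ..)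
    have hswap := matchedTo_swap hnd hmatch hw
    have hnd' := (List.perm_append_swap A (W ++ C) v w).nodup_iff.1 hnd
    simpa using ih (A := A ++ [w]) (by simpa using hnd') (by simpa using hswap)
      (by simpa using hbackup) (fun h => hbW (List.mem_cons_of_mem w h))

end Ranking

theorem stmt18_general {V : Type*} [DecidableEq V] (G : SimpleGraph V) [DecidableRel G.Adj]
    (order : List V) (hnd : order.Nodup) (u v b : V) (hv : v ∈ order)
    (hmatch : matchedTo G order u v)
    (hbackup : matchedTo G (order.erase v) u b) :
    ∀ i : ℕ, order.idxOf v ≤ i → i < order.idxOf b →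
      matchedTo G ((order.erase v).insertIdx i v) u v ∧
      matchedTo G ((((order.erase v).insertIdx i v)).erase v) u b ∧
      ((order.erase v).insertIdx i v).idxOf b = order.idxOf b := by
  intro i hvi hib
  obtain ⟨A, W, C, rfl, hins, hbAW, hbv⟩ :=
    List.exists_insertIdx_eq_append hnd hv (Ranking.mem_of_matchedTo hbackup) hvi hib
  have hvAWC : v ∉ A ++ (W ++ C) := (List.nodup_cons.1 (List.perm_middle.nodup_iff.1 hnd)).1
  rw [List.erase_append_right _ fun h => hvAWC (List.mem_append_left _ h),
    List.erase_cons_head] at hbackup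
  rw [hins, List.erase_append_right _ fun h => hvAWC (by simp at h ⊢; tauto),
    List.erase_cons_head]
  refine ⟨?_, by simpa using hbackup, ?_⟩
  · simpa using Ranking.matchedTo_move_right hnd hmatch hbackup fun h => hbAW (by simp [h])
  · simp only [List.mem_append, not_or] at hbAW
    simp [List.idxOf_append_of_notMem, hbAW, List.idxOf_cons_ne _ hbv.symm, Nat.add_assoc]

/-- Monotonicity with backup: if Ranking on `σ` matches `u` to `v` and `u` has backup `b`
(its match after removing `v`) with `σ(b) > σ(v) + 1`, then for every `i` with
`σ(v) ≤ i < σ(b)`, in the permutation obtained by moving `v` to rank `i` Ranking still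
matches `u` to `v`, `u` still has backup `b`, and `b` keeps its rank.  (The case
`i = σ(v) + 1` is the swap of `v` with its successor.) -/
theorem stmt18 {V : Type*} [DecidableEq V] (G : SimpleGraph V) [DecidableRel G.Adj]
    (order : List V) (hnd : order.Nodup) (u v b : V) (hv : v ∈ order)
    (hmatch : matchedTo G order u v)
    (hbackup : matchedTo G (order.erase v) u b)
    (hrank : order.idxOf v + 1 < order.idxOf b) :
    ∀ i : ℕ, order.idxOf v ≤ i → i < order.idxOf b →
      matchedTo G ((order.erase v).insertIdx i v) u v ∧
      matchedTo G ((((order.erase v).insertIdx i v)).erase v) u b ∧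
      ((order.erase v).insertIdx i v).idxOf b = order.idxOf b :=
  stmt18_general G order hnd u v b hv hmatch hbackup
end
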